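/- Let R be a unital associative algebra over ℚ, let P ∈ R be invertible and let M ∈ R satisfy PM − MP = 1. Writing B_{mp} = M^m P^p for m ≥ 0 and p ∈ ℤ, the following identities hold for all integers p, p′: [B_{0p}, B_{1p′}] = p B_{0,p+p′−1}; [B_{1p}, B_{1p′}] = (p − p′) B_{1,p+p′−1}; [B_{0p}, B_{2p′}] = p(p−1) B_{0,p+p′−2} + 2p B_{1,p+p′−1}. More generally, for all m, m′ ≥ 0 and p, p′ ∈ ℤ, the commutator [B_{mp}, B_{m′p′}] is an integer linear combination of the operators B_{nq} with 0 ≤ n < m + m′ and |q − (p + p′)| ≤ max(m, m′). -/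

import Mathlib

/-!
From `P M - M P = 1` one gets `P^p M = M P^p + p P^(p-1)` for every integer `p`, and then, by
induction on `m` and Pascal's rule, the normal-ordering formula
`P^p M^m = ∑_{k+i=m} C(m,k) p(p-1)⋯(p-k+1) M^i P^(p-k)`.
Hence `B_{mp} B_{m'p'}` is `B_{m+m',p+p'}` plus integer multiples of `B_{m+i,p+p'-k}` with
`k + i = m'`, `k ≥ 1`. In the commutator the two leading terms `B_{m+m',p+p'}` cancel, and the
three explicit identities are the cases `m' ≤ 2` of the formula.
-/

open Finset Polynomial

section
variable {R : Type*} [Ring R]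

def weylMonomial (u : Rˣ) (a : R) (m : ℕ) (p : ℤ) : R := a ^ m * ((u ^ p : Rˣ) : R)

variable {u : Rˣ} {a : R}

theorem val_zpow_mul_of_mul_sub_mul_eq_one (h : (u : R) * a - a * u = 1) (p : ℤ) :
    ((u ^ p : Rˣ) : R) * a = a * ((u ^ p : Rˣ) : R) + p • ((u ^ (p - 1) : Rˣ) : R) := by
  have hua : (u : R) * a = a * u + 1 := by rw [← h]; abel
  have hu'a : ((u⁻¹ : Rˣ) : R) * a
      = a * ((u⁻¹ : Rˣ) : R) - ((u⁻¹ : Rˣ) : R) * ((u⁻¹ : Rˣ) : R) := by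
    calc ((u⁻¹ : Rˣ) : R) * a = ((u⁻¹ : Rˣ) : R) * (u * a - 1) * ((u⁻¹ : Rˣ) : R) := by
          rw [hua, add_sub_cancel_right, mul_assoc, mul_assoc, Units.mul_inv, mul_one]
      _ = _ := by simp [mul_sub, sub_mul, ← mul_assoc]
  have val_zpow_mul_val_inv (n : ℤ) :
      ((u ^ n : Rˣ) : R) * ((u⁻¹ : Rˣ) : R) = ((u ^ (n - 1) : Rˣ) : R) := by
    rw [← Units.val_mul, zpow_sub_one]
  induction p using Int.induction_on with
  | zero => simp
  | succ p ih =>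
    rw [zpow_add_one, Units.val_mul, mul_assoc, hua, mul_add, ← mul_assoc, ih, add_mul, mul_one,
      mul_assoc, smul_mul_assoc, ← Units.val_mul, ← Units.val_mul, ← zpow_add_one,
      ← zpow_add_one,
      sub_add_cancel, add_sub_cancel_right, add_smul, one_smul]
    abel
  | pred p ih =>
    rw [zpow_sub_one, Units.val_mul, mul_assoc, hu'a, mul_sub, ← mul_assoc, ih, add_mul,
      mul_assoc, smul_mul_assoc, ← mul_assoc (((u ^ (-(p : ℤ)) : Rˣ) : R)),
      val_zpow_mul_val_inv, val_zpow_mul_val_inv, sub_smul, one_smul]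
    abel

theorem val_zpow_mul_pow_of_mul_sub_mul_eq_one (h : (u : R) * a - a * u = 1) (p : ℤ) (m : ℕ) :
    ((u ^ p : Rˣ) : R) * a ^ m = ∑ ki ∈ antidiagonal m,
      m.choose ki.1 •
        ((descPochhammer ℤ ki.1).eval p • (a ^ ki.2 * ((u ^ (p - ki.1) : Rˣ) : R))) := by
  induction m with
  | zero => simp
  | succ m ih =>
    rw [sum_antidiagonal_choose_succ_nsmul
      (fun k i => (descPochhammer ℤ k).eval p • (a ^ i * ((u ^ (p - k) : Rˣ) : R))),
      pow_succ, ← mul_assoc, ih, sum_mul, ← sum_add_distrib]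
    refine sum_congr rfl fun ⟨k, i⟩ hki => ?_
    rw [HasAntidiagonal.mem_antidiagonal] at hki
    rw [← hki, Nat.choose_symm_add, ← smul_add, smul_mul_assoc, smul_mul_assoc, mul_assoc,
      val_zpow_mul_of_mul_sub_mul_eq_one h, mul_add, ← mul_assoc, ← pow_succ, mul_smul_comm,
      smul_add, smul_smul, descPochhammer_succ_eval, Nat.cast_succ, sub_add_eq_sub_sub]

theorem weylMonomial_mul (h : (u : R) * a - a * u = 1) (m m' : ℕ) (p p' : ℤ) :
    weylMonomial u a m p * weylMonomial u a m' p' = ∑ ki ∈ antidiagonal m',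
      m'.choose ki.1 •
        ((descPochhammer ℤ ki.1).eval p • weylMonomial u a (m + ki.2) (p + p' - ki.1)) := by
  rw [weylMonomial, weylMonomial, mul_assoc, ← mul_assoc ((u ^ p : Rˣ) : R),
    val_zpow_mul_pow_of_mul_sub_mul_eq_one h, sum_mul, mul_sum]
  refine sum_congr rfl fun ki _ => ?_
  rw [smul_mul_assoc, smul_mul_assoc, mul_smul_comm, mul_smul_comm, mul_assoc, ← mul_assoc,
    ← Units.val_mul, ← zpow_add, ← pow_add, weylMonomial, sub_add_eq_add_sub]

theorem weylMonomial_mul_sub_mem_span (h : (u : R) * a - a * u = 1) (m m' : ℕ) (p p' : ℤ) :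
    weylMonomial u a m p * weylMonomial u a m' p' - weylMonomial u a (m + m') (p + p') ∈
      Submodule.span ℤ (Function.uncurry (weylMonomial u a) ''
        {nq | nq.1 < m + m' ∧ |nq.2 - (p + p')| ≤ m'}) := by
  rw [weylMonomial_mul h,
    ← add_sum_erase _ _ (mem_antidiagonal.mpr (zero_add m') : (0, m') ∈ _)]
  simp only [Nat.choose_zero_right, descPochhammer_zero, eval_one, Nat.cast_zero, sub_zero,
    one_smul, add_sub_cancel_left]
  refine Submodule.sum_mem _ fun ⟨k, i⟩ hki => ?_
  obtain ⟨hki_ne, hki⟩ := mem_erase.mp hki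
  rw [HasAntidiagonal.mem_antidiagonal] at hki
  have hk : k ≠ 0 := by rintro rfl; simp_all
  refine Submodule.smul_of_tower_mem _ _ (Submodule.smul_mem _ _
    (Submodule.subset_span ⟨(m + i, p + p' - k), ⟨?_, ?_⟩, rfl⟩))
  · dsimp only; omega
  · dsimp only
    rw [sub_sub_cancel_left, abs_neg, Nat.abs_cast]
    exact_mod_cast hki ▸ Nat.le_add_right k i

theorem weylMonomial_commutator_mem_span (h : (u : R) * a - a * u = 1) (m m' : ℕ) (p p' : ℤ) :
    weylMonomial u a m p * weylMonomial u a m' p'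
        - weylMonomial u a m' p' * weylMonomial u a m p ∈
      Submodule.span ℤ (Function.uncurry (weylMonomial u a) ''
        {nq | nq.1 < m + m' ∧ |nq.2 - (p + p')| ≤ max (m : ℤ) m'}) := by
  have hmono {r : ℤ} (hr : r ≤ max (m : ℤ) m') :
      {nq : ℕ × ℤ | nq.1 < m + m' ∧ |nq.2 - (p + p')| ≤ r} ⊆
        {nq | nq.1 < m + m' ∧ |nq.2 - (p + p')| ≤ max (m : ℤ) m'} :=
    fun nq hnq => ⟨hnq.1, hnq.2.trans hr⟩
  have h₁ := weylMonomial_mul_sub_mem_span h m m' p p'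
  have h₂ := weylMonomial_mul_sub_mem_span h m' m p' p
  rw [add_comm m', add_comm p'] at h₂
  convert Submodule.sub_mem _ (Submodule.span_mono (Set.image_mono (hmono (le_max_right _ _))) h₁)
    (Submodule.span_mono (Set.image_mono (hmono (le_max_left _ _))) h₂) using 1
  abel

theorem weylMonomial_commutator_zero_one (h : (u : R) * a - a * u = 1) (p p' : ℤ) :
    weylMonomial u a 0 p * weylMonomial u a 1 p' - weylMonomial u a 1 p' * weylMonomial u a 0 p
      = p • weylMonomial u a 0 (p + p' - 1) := by
  rw [weylMonomial_mul h, weylMonomial_mul h]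
  simp [Finset.Nat.sum_antidiagonal_succ, add_comm p' p]

theorem weylMonomial_commutator_one_one (h : (u : R) * a - a * u = 1) (p p' : ℤ) :
    weylMonomial u a 1 p * weylMonomial u a 1 p' - weylMonomial u a 1 p' * weylMonomial u a 1 p
      = (p - p') • weylMonomial u a 1 (p + p' - 1) := by
  rw [weylMonomial_mul h, weylMonomial_mul h]
  simp [Finset.Nat.sum_antidiagonal_succ, add_comm p' p, sub_mul]

theorem weylMonomial_commutator_zero_two (h : (u : R) * a - a * u = 1) (p p' : ℤ) :
    weylMonomial u a 0 p * weylMonomial u a 2 p' - weylMonomial u a 2 p' * weylMonomial u a 0 p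
      = (p * (p - 1)) • weylMonomial u a 0 (p + p' - 2)
        + (2 * p) • weylMonomial u a 1 (p + p' - 1) := by
  rw [weylMonomial_mul h, weylMonomial_mul h]
  simp [Finset.Nat.sum_antidiagonal_succ, descPochhammer_succ_eval, add_comm p' p, mul_assoc]
  abel

end

theorem stmt_15 {R : Type*} [Ring R]
    (P : Rˣ) (M : R) (hPM : (P : R) * M - M * (P : R) = 1) :
    let B : ℕ → ℤ → R := fun m p => M ^ m * ((P ^ p : Rˣ) : R)
    (∀ p p' : ℤ, B 0 p * B 1 p' - B 1 p' * B 0 p = p • B 0 (p + p' - 1)) ∧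
    (∀ p p' : ℤ, B 1 p * B 1 p' - B 1 p' * B 1 p = (p - p') • B 1 (p + p' - 1)) ∧
    (∀ p p' : ℤ, B 0 p * B 2 p' - B 2 p' * B 0 p
      = (p * (p - 1)) • B 0 (p + p' - 2) + (2 * p) • B 1 (p + p' - 1)) ∧
    (∀ (m m' : ℕ) (p p' : ℤ), ∃ c : ℕ × ℤ →₀ ℤ,
      (∀ n q, c (n, q) ≠ 0 → n < m + m' ∧ |q - (p + p')| ≤ (max m m' : ℤ)) ∧
      B m p * B m' p' - B m' p' * B m p
        = c.sum fun nq k => k • B nq.1 nq.2) := by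
  intro B
  refine ⟨weylMonomial_commutator_zero_one hPM, weylMonomial_commutator_one_one hPM,
    weylMonomial_commutator_zero_two hPM, fun m m' p p' => ?_⟩
  obtain ⟨c, hc, hsum⟩ := (Finsupp.mem_span_image_iff_linearCombination ℤ).mp
    (weylMonomial_commutator_mem_span hPM m m' p p')
  refine ⟨c, fun n q hnq =>
    (Finsupp.mem_supported ℤ c).mp hc (Finsupp.mem_support_iff.mpr hnq), ?_⟩
  rw [← Finsupp.linearCombination_apply]
  exact hsum.symm
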